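/- arXiv:math/0512099 — 2 statements merged into one kernel-verified Lean document; each statement's English description precedes it below -/
import Mathlib

section
/- Let p be an odd prime with p ≡ 3 (mod 4). In the group ring ℤ[ℤ/p], the element p·(Σ_{k=0}^{p-1} t^{2k²})² is not equal to p·(Σ_{k=0}^{p-1} t^{2k²})·(Σ_{k=0}^{p-1} t^{−2k²}), where t denotes a generator of ℤ/p written multiplicatively. -/
/-!
The constant term of `u * u` counts pairs `(j, k)` with `2j² + 2k² = 0` in `ZMod p`; since `-1` is
not a square modulo `p ≡ 3 (mod 4)`, only `(0, 0)` qualifies, so it is `1`. The constant term of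
`u * v` counts pairs with `2j² = 2k²`, which include the whole diagonal, so it is at least `p`.
Hence `u * u ≠ u * v`, and multiplying by `p` preserves this in the torsion-free group `ℤ[ℤ/p]`.
-/

open Finset

namespace AddMonoidAlgebra

theorem coeff_sum_single_mul_sum_single {R G ι κ : Type*} [Semiring R] [AddMonoid G]
    [DecidableEq G] (s : Finset ι) (t : Finset κ) (f : ι → G) (g : κ → G) (a : G) :
    ((∑ i ∈ s, single (f i) (1 : R)) * ∑ j ∈ t, single (g j) (1 : R)).coeff a =
      #{x ∈ s ×ˢ t | f x.1 + g x.2 = a} := by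
  rw [sum_mul_sum, ← sum_product', coeff_sum, Finsupp.finsetSum_apply, card_filter,
    Nat.cast_sum]
  refine sum_congr rfl fun x _ => ?_
  rw [single_mul_single, coeff_single, Finsupp.single_apply, mul_one]
  split_ifs <;> simp_all [eq_comm]

end AddMonoidAlgebra

namespace ZMod

theorem natCast_eq_zero_iff_of_lt {p n : ℕ} (hn : n < p) : (n : ZMod p) = 0 ↔ n = 0 := by
  rw [natCast_eq_zero_iff]
  exact ⟨fun h => Nat.eq_zero_of_dvd_of_lt h hn, fun h => h ▸ dvd_zero p⟩

variable {p : ℕ} [Fact p.Prime]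

theorem eq_zero_of_sq_add_sq_eq_zero (hp : p % 4 = 3) {x y : ZMod p} (h : x ^ 2 + y ^ 2 = 0) :
    x = 0 ∧ y = 0 := by
  have hy : y = 0 := by
    by_contra hy
    exact mod_four_ne_three_of_sq_eq_neg_sq' hy (eq_neg_of_add_eq_zero_left h) hp
  subst hy
  simpa using h

theorem two_sq_add_two_sq_eq_zero_iff (hp : p % 4 = 3) {j k : ℕ} (hj : j < p) (hk : k < p) :
    ((2 * j ^ 2 : ℕ) : ZMod p) + ((2 * k ^ 2 : ℕ) : ZMod p) = 0 ↔ j = 0 ∧ k = 0 := by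
  have htwo : (2 : ZMod p) ≠ 0 := by
    exact_mod_cast (natCast_eq_zero_iff_of_lt (p := p) (n := 2) (by omega)).not.mpr two_ne_zero
  constructor
  · intro h
    push_cast at h
    have hsq : (j : ZMod p) ^ 2 + (k : ZMod p) ^ 2 = 0 := by
      rw [← mul_add] at h
      exact (mul_eq_zero.mp h).resolve_left htwo
    obtain ⟨hj0, hk0⟩ := eq_zero_of_sq_add_sq_eq_zero hp hsq
    exact ⟨(natCast_eq_zero_iff_of_lt hj).mp hj0, (natCast_eq_zero_iff_of_lt hk).mp hk0⟩
  · rintro ⟨rfl, rfl⟩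
    simp

end ZMod

theorem stmt4_general (p : ℕ) (hp : p.Prime) (h4 : p % 4 = 3)
    (u v : AddMonoidAlgebra ℤ (ZMod p))
    (hu : u = ∑ k ∈ Finset.range p,
      AddMonoidAlgebra.single ((2 * k ^ 2 : ℕ) : ZMod p) (1 : ℤ))
    (hv : v = ∑ k ∈ Finset.range p,
      AddMonoidAlgebra.single (-((2 * k ^ 2 : ℕ) : ZMod p)) (1 : ℤ)) :
    (p : ℤ) • (u * u) ≠ (p : ℤ) • (u * v) := by
  have : Fact p.Prime := ⟨hp⟩
  have huu : (u * u).coeff 0 = 1 := by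
    rw [hu, AddMonoidAlgebra.coeff_sum_single_mul_sum_single, Nat.cast_eq_one, card_eq_one]
    refine ⟨(0, 0), eq_singleton_iff_unique_mem.mpr ⟨by simp [hp.pos], ?_⟩⟩
    rintro ⟨j, k⟩ hjk
    simp only [mem_filter, mem_product, mem_range] at hjk
    obtain ⟨rfl, rfl⟩ := (ZMod.two_sq_add_two_sq_eq_zero_iff h4 hjk.1.1 hjk.1.2).mp hjk.2
    rfl
  have huv : (p : ℤ) ≤ (u * v).coeff 0 := by
    rw [hu, hv, AddMonoidAlgebra.coeff_sum_single_mul_sum_single, Nat.cast_le]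
    calc p = #(range p).diag := by rw [diag_card, card_range]
      _ ≤ _ := card_le_card fun x hx => by
        simp only [mem_diag, mem_range] at hx
        simp [hx.1, ← hx.2]
  have hne : u * u ≠ u * v := fun h => by
    rw [← h, huu] at huv
    exact absurd huv (by exact_mod_cast hp.one_lt.not_ge)
  rwa [Ne, smul_right_inj (by exact_mod_cast hp.ne_zero)]

/-- For an odd prime `p ≡ 3 (mod 4)`, in the group ring `ℤ[ℤ/p]`
(realized as `AddMonoidAlgebra ℤ (ZMod p)`, where `t^m` is `single m 1`),
`p·(Σ_{k<p} t^{2k²})² ≠ p·(Σ_{k<p} t^{2k²})·(Σ_{k<p} t^{−2k²})`. -/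
theorem stmt4 (p : ℕ) (hp : p.Prime) (hodd : Odd p) (h4 : p % 4 = 3)
    (u v : AddMonoidAlgebra ℤ (ZMod p))
    (hu : u = ∑ k ∈ Finset.range p,
      AddMonoidAlgebra.single ((2 * k ^ 2 : ℕ) : ZMod p) (1 : ℤ))
    (hv : v = ∑ k ∈ Finset.range p,
      AddMonoidAlgebra.single (-((2 * k ^ 2 : ℕ) : ZMod p)) (1 : ℤ)) :
    (p : ℤ) • (u * u) ≠ (p : ℤ) • (u * v) :=
  stmt4_general p hp h4 u v hu hv
end

section
/- Let X be a quandle and let C_n^D(X) ⊆ C_n^R(X) be the subgroup generated by n-tuples (x_1,...,x_n) with x_i = x_{i+1} for some i (for n > 1; and 0 for n ≤ 1). Then the rack boundary map satisfies ∂_n(C_n^D(X)) ⊆ C_{n-1}^D(X), so the degenerate chains form a subcomplex. -/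
/-
If `x_p = x_{p+1}`, every face of `x` deleting an index other than `p` and `p+1` still has two
equal neighbours, while the two faces deleting `p` and `p+1` coincide and enter `∂` with opposite
signs. For the faces where the deleted entry acts on its left neighbours this is where
idempotence enters: `x_p * x_{p+1} = x_p * x_p = x_p`.
-/

/-- A quandle: a set with a binary operation `*` satisfying
(Q1) idempotence, (Q2) unique solvability `∃! c, c * b = a`, and
(Q3) right self-distributivity. -/
structure Quandle' (X : Type) where
  op : X → X → X
  idem : ∀ a, op a a = a
  rightUnique : ∀ a b, ∃! c, op c b = a
  distrib : ∀ a b c, op (op a b) c = op (op a c) (op b c)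

/-- The rack chain group `C_n^R(X)`: the free abelian group on `n`-tuples of
elements of `X`, realized as finitely supported `ℤ`-valued functions. -/
abbrev rackChain (X : Type) (n : ℕ) : Type := (Fin n → X) →₀ ℤ

/-- The rack boundary map `∂ : C_{n+1}^R(X) → C_n^R(X)`, defined on a generator
`(x_1, ..., x_{n+1})` (here the tuple `x : Fin (n+1) → X`, with the paper's index
`i ∈ {1, ..., n+1}` corresponding to `i : Fin (n+1)` via `i.val + 1`) by
`(−1)^n Σ_i (−1)^{i+1} [(x_1,...,x̂_i,...,x_{n+1}) −
 (x_1*x_i,...,x_{i-1}*x_i,x_{i+1},...,x_{n+1})]`.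
(For `n = 0`, i.e. `∂_1`, the two terms coincide and the map is `0`.) -/
noncomputable def rackBd {X : Type} (q : Quandle' X) (n : ℕ) :
    rackChain X (n + 1) →+ rackChain X n :=
  Finsupp.liftAddHom fun x : Fin (n + 1) → X =>
    zmultiplesHom (rackChain X n)
      (∑ i : Fin (n + 1), ((-1 : ℤ) ^ (n + (i : ℕ) + 1)) •
        (Finsupp.single (fun j : Fin n => x (i.succAbove j)) (1 : ℤ)
          - Finsupp.single
              (fun j : Fin n =>
                if (i.succAbove j : Fin (n + 1)) < i then
                  q.op (x (i.succAbove j)) (x i)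
                else x (i.succAbove j)) (1 : ℤ)))


/-- A tuple is degenerate if two consecutive entries are equal. -/
def IsDegTuple {X : Type} {n : ℕ} (x : Fin n → X) : Prop :=
  ∃ i j : Fin n, (i : ℕ) + 1 = (j : ℕ) ∧ x i = x j

/-- The degenerate subgroup `C_n^D(X) ⊆ C_n^R(X)`, generated by tuples with two
equal consecutive entries. -/
noncomputable def degSubgroup (X : Type) (n : ℕ) : AddSubgroup (rackChain X n) :=
  AddSubgroup.closure {c | ∃ x : Fin n → X, IsDegTuple x ∧ c = Finsupp.single x 1}

lemma Fin.val_succAbove {n : ℕ} (i : Fin (n + 1)) (m : Fin n) :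
    (i.succAbove m : ℕ) = if (m : ℕ) < i then (m : ℕ) else m + 1 := by
  unfold Fin.succAbove
  split_ifs <;> simp_all [Fin.lt_def]

lemma Fin.succAbove_castSucc_eq_succAbove_succ {n : ℕ} {p m : Fin n} (h : m ≠ p) :
    p.castSucc.succAbove m = p.succ.succAbove m := by
  rcases h.lt_or_gt with h | h
  · rw [Fin.succAbove_castSucc_of_lt _ _ h, Fin.succAbove_succ_of_le _ _ h.le]
  · rw [Fin.succAbove_castSucc_of_le _ _ h.le, Fin.succAbove_succ_of_lt _ _ h]

lemma Fin.exists_succAbove_eq_castSucc_succ {n : ℕ} {p : Fin n} {i : Fin (n + 1)}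
    (h₁ : i ≠ p.castSucc) (h₂ : i ≠ p.succ) :
    ∃ a b : Fin n, (a : ℕ) + 1 = b ∧ i.succAbove a = p.castSucc ∧ i.succAbove b = p.succ := by
  obtain ⟨a, ha⟩ := Fin.exists_succAbove_eq h₁.symm
  obtain ⟨b, hb⟩ := Fin.exists_succAbove_eq h₂.symm
  refine ⟨a, b, ?_, ha, hb⟩
  have ha' := congrArg Fin.val ha
  have hb' := congrArg Fin.val hb
  have h₁' := Fin.val_ne_of_ne h₁
  have h₂' := Fin.val_ne_of_ne h₂
  simp only [Fin.val_succAbove, Fin.val_castSucc, Fin.val_succ] at *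
  split_ifs at ha' hb' <;> omega

section

variable {X : Type}

lemma IsDegTuple.exists_castSucc_succ {n : ℕ} {x : Fin (n + 1) → X} (hx : IsDegTuple x) :
    ∃ p : Fin n, x p.castSucc = x p.succ := by
  obtain ⟨k, j, hkj, hx⟩ := hx
  refine ⟨⟨k, by omega⟩, ?_⟩
  convert hx using 2 <;> ext <;> simp [hkj]

lemma isDegTuple_comp_succAbove {n : ℕ} {y : Fin (n + 1) → X} {p : Fin n} {i : Fin (n + 1)}
    (hy : y p.castSucc = y p.succ) (h₁ : i ≠ p.castSucc) (h₂ : i ≠ p.succ) :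
    IsDegTuple (y ∘ i.succAbove) := by
  obtain ⟨a, b, hab, ha, hb⟩ := Fin.exists_succAbove_eq_castSucc_succ h₁ h₂
  exact ⟨a, b, hab, by simp [ha, hb, hy]⟩

lemma comp_succAbove_castSucc_eq_comp_succAbove_succ {n : ℕ} {y : Fin (n + 1) → X} {p : Fin n}
    (hy : y p.castSucc = y p.succ) :
    y ∘ p.castSucc.succAbove = y ∘ p.succ.succAbove := by
  funext m
  obtain rfl | h := eq_or_ne m p
  · simp [hy]
  · simp [Fin.succAbove_castSucc_eq_succAbove_succ h]

lemma single_mem_degSubgroup {n : ℕ} {x : Fin n → X} (hx : IsDegTuple x) :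
    Finsupp.single x 1 ∈ degSubgroup X n :=
  AddSubgroup.subset_closure ⟨x, hx, rfl⟩

namespace Quandle'

def actBelow (q : Quandle' X) {n : ℕ} (x : Fin (n + 1) → X) (i : Fin (n + 1)) :
    Fin (n + 1) → X :=
  fun k => if k < i then q.op (x k) (x i) else x k

lemma rackBd_single (q : Quandle' X) {n : ℕ} (x : Fin (n + 1) → X) :
    rackBd q n (Finsupp.single x 1) = ∑ i : Fin (n + 1), (-1 : ℤ) ^ (n + (i : ℕ) + 1) •
      (Finsupp.single (x ∘ i.succAbove) 1 - Finsupp.single (q.actBelow x i ∘ i.succAbove) 1) := by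
  rw [rackBd, Finsupp.liftAddHom_apply_single, zmultiplesHom_apply, one_smul]
  rfl

lemma actBelow_castSucc_eq_succ (q : Quandle' X) {n : ℕ} {x : Fin (n + 1) → X} {p : Fin n}
    {i : Fin (n + 1)} (hx : x p.castSucc = x p.succ) (h : i ≠ p.succ) :
    q.actBelow x i p.castSucc = q.actBelow x i p.succ := by
  have : p.castSucc < i ↔ p.succ < i := by
    rw [Fin.castSucc_lt_iff_succ_le, le_iff_lt_or_eq, or_iff_left h.symm]
  simp only [actBelow, this, hx]

lemma actBelow_comp_succAbove_castSucc (q : Quandle' X) {n : ℕ} {x : Fin (n + 1) → X} {p : Fin n}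
    (hx : x p.castSucc = x p.succ) :
    q.actBelow x p.castSucc ∘ p.castSucc.succAbove = q.actBelow x p.succ ∘ p.succ.succAbove := by
  funext m
  rcases lt_trichotomy m p with h | rfl | h
  · simp [actBelow, Fin.succAbove_castSucc_of_lt _ _ h, Fin.succAbove_succ_of_le _ _ h.le, h,
      h.le, hx]
  · simp [actBelow, hx, q.idem]
  · simp [actBelow, Fin.succAbove_castSucc_of_le _ _ h.le, Fin.succAbove_succ_of_lt _ _ h,
      lt_asymm h, (Fin.castSucc_lt_succ_iff.2 h.le).asymm]

lemma rackBd_single_mem_degSubgroup (q : Quandle' X) {n : ℕ} {x : Fin (n + 1) → X}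
    (hx : IsDegTuple x) : rackBd q n (Finsupp.single x 1) ∈ degSubgroup X n := by
  obtain ⟨p, hp⟩ := hx.exists_castSucc_succ
  have hne : p.succ ≠ p.castSucc := Fin.castSucc_lt_succ.ne'
  rw [q.rackBd_single, ← Finset.add_sum_erase _ _ (Finset.mem_univ p.castSucc),
    ← Finset.add_sum_erase _ _ (Finset.mem_erase.2 ⟨hne, Finset.mem_univ p.succ⟩), ← add_assoc]
  refine add_mem ?cancelling (sum_mem fun i hi => ?_)
  case cancelling =>
    have hsign : (-1 : ℤ) ^ (n + (p.castSucc : ℕ) + 1) + (-1) ^ (n + (p.succ : ℕ) + 1) = 0 := by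
      simp [pow_succ, ← add_assoc]
    rw [comp_succAbove_castSucc_eq_comp_succAbove_succ hp,
      q.actBelow_comp_succAbove_castSucc hp, ← add_smul, hsign, zero_smul]
    exact zero_mem _
  obtain ⟨h₂, h₁⟩ : i ≠ p.succ ∧ i ≠ p.castSucc := by simpa using hi
  exact zsmul_mem (sub_mem (single_mem_degSubgroup (isDegTuple_comp_succAbove hp h₁ h₂))
    (single_mem_degSubgroup (isDegTuple_comp_succAbove
      (q.actBelow_castSucc_eq_succ hp h₂) h₁ h₂))) _

end Quandle'

end

/-- The rack boundary maps the degenerate chains into the degenerate chains: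
`∂_n(C_n^D(X)) ⊆ C_{n-1}^D(X)`, so the degenerate chains form a subcomplex. -/
theorem stmt10 {X : Type} (q : Quandle' X) (n : ℕ) :
    ∀ c ∈ degSubgroup X (n + 1), rackBd q n c ∈ degSubgroup X n := by
  intro c hc
  refine (AddSubgroup.closure_le ((degSubgroup X n).comap (rackBd q n))).2 ?_ hc
  rintro _ ⟨x, hx, rfl⟩
  exact q.rackBd_single_mem_degSubgroup hx
end
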